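/- arXiv:1512.08011 — 2 statements merged into one kernel-verified Lean document; each statement's English description precedes it below -/
import Mathlib

section
/- For every E ∈ ℝ and every n ≥ 1 there exist real numbers μ_n, ν_n, ω_n such that A_{2n−1}(E) − B_{2n−1}(E) = μ_n·U together with t_{2n}(E) = t_{2n−1}(E)² − μ_n² − 2, and A_{2n}(E) − B_{2n}(E) = ν_n·V + ω_n·W together with t_{2n+1}(E) = t_{2n}(E)² − ν_n² + ω_n² − 2. -/
noncomputable section

open Filter Topology

namespace TMH

/-- the pair `(A_n(E), B_n(E))`:  `A_0 = [[E−λ,−1],[1,0]]`, `B_0 = [[E+λ,−1],[1,0]]`,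
`A_{n+1} = B_n A_n`, `B_{n+1} = A_n B_n`. -/
def AB (lam E : ℝ) : ℕ → Matrix (Fin 2) (Fin 2) ℝ × Matrix (Fin 2) (Fin 2) ℝ
  | 0 => (!![E - lam, -1; 1, 0], !![E + lam, -1; 1, 0])
  | n + 1 => ((AB lam E n).2 * (AB lam E n).1, (AB lam E n).1 * (AB lam E n).2)

def A (lam E : ℝ) (n : ℕ) : Matrix (Fin 2) (Fin 2) ℝ := (AB lam E n).1
def B (lam E : ℝ) (n : ℕ) : Matrix (Fin 2) (Fin 2) ℝ := (AB lam E n).2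

/-- the trace polynomials `t_n(E) = tr(A_n(E))` -/
def t (lam E : ℝ) (n : ℕ) : ℝ := (A lam E n).trace

/-- the set `Σ_I` of type-I energies -/
def SigmaI (lam : ℝ) : Set ℝ := {E | ∃ k : ℕ, 1 ≤ k ∧ t lam E k = 0}

/-- the set `Σ_II` of type-II energies -/
def SigmaII (lam : ℝ) : Set ℝ :=
  {E | ∃ n₀ : ℕ, ∀ n : ℕ, n₀ ≤ n → |t lam E (2 * n)| ≤ 2 ∧ 2 < |t lam E (2 * n + 1)|}

/-- the set `Σ_III` of type-III energies -/
def SigmaIII (lam : ℝ) : Set ℝ :=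
  {E | ∃ n₀ : ℕ, ∀ n : ℕ, n₀ ≤ n → |t lam E (2 * n + 1)| ≤ 2 ∧ 2 < |t lam E (2 * n)|}

end TMH
namespace TMH

def U : Matrix (Fin 2) (Fin 2) ℝ := !![0, 1; 1, 0]
def V : Matrix (Fin 2) (Fin 2) ℝ := !![1, 0; 0, -1]
def W : Matrix (Fin 2) (Fin 2) ℝ := !![0, -1; 1, 0]

end TMH
namespace TMH

lemma A_succ (lam E : ℝ) (k : ℕ) : A lam E (k+1) = B lam E k * A lam E k := rfl
lemma B_succ (lam E : ℝ) (k : ℕ) : B lam E (k+1) = A lam E k * B lam E k := rfl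

lemma invariant (lam E : ℝ) : ∀ m : ℕ, ∃ a b c d : ℝ, a*d - b*c = 1 ∧
    A lam E (2*m+1) = !![a, b; c, d] ∧ B lam E (2*m+1) = !![a, -c; -b, d] := by
  intro m
  induction m with
  | zero =>
    refine ⟨E^2 - lam^2 - 1, -(E+lam), E - lam, -1, by ring, ?_, ?_⟩
    · show (AB lam E 0).2 * (AB lam E 0).1 = _
      simp only [AB]
      ext i j
      fin_cases i <;> fin_cases j <;>
        simp [Matrix.mul_apply, Fin.sum_univ_two] <;> ring
    · show (AB lam E 0).1 * (AB lam E 0).2 = _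
      simp only [AB]
      ext i j
      fin_cases i <;> fin_cases j <;>
        simp [Matrix.mul_apply, Fin.sum_univ_two] <;> ring
  | succ m ih =>
    obtain ⟨a, b, c, d, h, hA, hB⟩ := ih
    have h2 : A lam E ((2*m+1)+1) = !![a,-c;-b,d] * !![a,b;c,d] := by
      rw [A_succ, hA, hB]
    have h3 : B lam E ((2*m+1)+1) = !![a,b;c,d] * !![a,-c;-b,d] := by
      rw [B_succ, hA, hB]
    have h4 : A lam E ((2*m+1)+1+1)
        = (!![a,b;c,d] * !![a,-c;-b,d]) * (!![a,-c;-b,d] * !![a,b;c,d]) := by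
      rw [A_succ, h2, h3]
    have h5 : B lam E ((2*m+1)+1+1)
        = (!![a,-c;-b,d] * !![a,b;c,d]) * (!![a,b;c,d] * !![a,-c;-b,d]) := by
      rw [B_succ, h2, h3]
    have e1 : 2*(m+1)+1 = (2*m+1)+1+1 := by omega
    rw [e1, h4, h5]
    refine ⟨b*c*d^2 + b^2*c^2 - a*c^2*d - a*b^2*d - a^2*c^2 + a^2*b*c - a^2*b^2 + a^4,
      b*d^3 + b^2*c*d - b^3*d - a*c*d^2 + a*b^2*c - a*b^3 - a^2*c*d + a^3*b,
      c*d^3 - c^3*d + b*c^2*d - a*c^3 - a*b*d^2 + a*b*c^2 - a^2*b*d + a^3*c,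
      d^4 - c^2*d^2 + b*c*d^2 - b^2*d^2 + b^2*c^2 - a*c^2*d - a*b^2*d + a^2*b*c,
      ?_, ?_, ?_⟩
    · linear_combination (1 - b*c + b^2*c^2 - b^3*c^3 + a*d - 2*a*b*c*d + 3*a*b^2*c^2*d
        + a^2*d^2 - 3*a^2*b*c*d^2 + a^3*d^3) * h
    · ext i j
      fin_cases i <;> fin_cases j <;>
        simp [Matrix.mul_apply, Fin.sum_univ_two] <;> ring
    · ext i j
      fin_cases i <;> fin_cases j <;>
        simp [Matrix.mul_apply, Fin.sum_univ_two] <;> ring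

/-- **Lemma (existence of `μ_n`, `ν_n`, `ω_n`).**
For every `E ∈ ℝ` and every `n ≥ 1` there exist reals `μ_n, ν_n, ω_n` with
`A_{2n−1} − B_{2n−1} = μ_n U`, `t_{2n} = t_{2n−1}² − μ_n² − 2`,
`A_{2n} − B_{2n} = ν_n V + ω_n W` and `t_{2n+1} = t_{2n}² − ν_n² + ω_n² − 2`. -/
theorem exists_mu_nu_omega (lam : ℝ) (hlam : lam ≠ 0) (E : ℝ)
    (n : ℕ) (hn : 1 ≤ n) :
    ∃ μ ν ω : ℝ,
      A lam E (2 * n - 1) - B lam E (2 * n - 1) = μ • U ∧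
      t lam E (2 * n) = t lam E (2 * n - 1) ^ 2 - μ ^ 2 - 2 ∧
      A lam E (2 * n) - B lam E (2 * n) = ν • V + ω • W ∧
      t lam E (2 * n + 1) = t lam E (2 * n) ^ 2 - ν ^ 2 + ω ^ 2 - 2 := by
  obtain ⟨m, rfl⟩ : ∃ m, n = m + 1 := ⟨n - 1, by omega⟩
  obtain ⟨a, b, c, d, h, hA, hB⟩ := invariant lam E m
  have h2 : A lam E ((2*m+1)+1) = !![a,-c;-b,d] * !![a,b;c,d] := by
    rw [A_succ, hA, hB]
  have h3 : B lam E ((2*m+1)+1) = !![a,b;c,d] * !![a,-c;-b,d] := by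
    rw [B_succ, hA, hB]
  have h4 : A lam E ((2*m+1)+1+1)
      = (!![a,b;c,d] * !![a,-c;-b,d]) * (!![a,-c;-b,d] * !![a,b;c,d]) := by
    rw [A_succ, h2, h3]
  have e0 : 2*(m+1) - 1 = 2*m+1 := by omega
  have e1 : 2*(m+1) = (2*m+1)+1 := by omega
  have e2 : 2*(m+1)+1 = (2*m+1)+1+1 := by omega
  refine ⟨b + c, (b-c)*(b+c), (d-a)*(b+c), ?_, ?_, ?_, ?_⟩
  · rw [e0, hA, hB]
    ext i j
    fin_cases i <;> fin_cases j <;> simp [U] <;> ring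
  · rw [e0, e1, t, t, h2, hA, Matrix.trace_fin_two]
    simp [Matrix.mul_apply, Fin.sum_univ_two]
    linear_combination (-2:ℝ) * h
  · rw [e1, h2, h3]
    ext i j
    fin_cases i <;> fin_cases j <;>
      simp [V, W, Matrix.mul_apply, Fin.sum_univ_two] <;> ring
  · rw [e2, e1, t, t, h4, h2, Matrix.trace_fin_two, Matrix.trace_fin_two]
    simp [Matrix.mul_apply, Fin.sum_univ_two]
    linear_combination (-2 + 2*b*c - 2*a*d) * h

end TMH
end
end

section
/- Σ_II = {E ∈ ℝ : t_{2n}(E) → 0 and t_{2n−1}(E) → −∞ as n → ∞}, and Σ_III = {E ∈ ℝ : t_{2n−1}(E) → 0 and t_{2n}(E) → −∞ as n → ∞}. -/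
noncomputable section

open Filter Topology

namespace TMH

/-- a general trace identity for `2 × 2` matrices -/
lemma tr4 (M N : Matrix (Fin 2) (Fin 2) ℝ) :
    (M*M*(N*N)).trace = M.trace * N.trace * (M*N).trace
      - M.trace^2 * N.det - N.trace^2 * M.det + 2*(M.det*N.det) := by
  rw [Matrix.eta_fin_two M, Matrix.eta_fin_two N]
  simp [Matrix.mul_fin_two, Matrix.trace_fin_two, Matrix.det_fin_two]
  ring

lemma Asucc (lam E : ℝ) (n : ℕ) : A lam E (n+1) = B lam E n * A lam E n := rfl
lemma Bsucc (lam E : ℝ) (n : ℕ) : B lam E (n+1) = A lam E n * B lam E n := rfl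

lemma detA (lam E : ℝ) : ∀ n, (A lam E n).det = 1 ∧ (B lam E n).det = 1 := by
  intro n
  induction n with
  | zero =>
      constructor <;> simp [A, B, AB, Matrix.det_fin_two_of]
  | succ m ih =>
      constructor <;> simp [Asucc, Bsucc, Matrix.det_mul, ih.1, ih.2]

lemma trB (lam E : ℝ) (n : ℕ) : (B lam E (n+1)).trace = t lam E (n+1) := by
  rw [Bsucc, t, Asucc, Matrix.trace_mul_comm]

/-- the Thue–Morse trace recursion `t_{n+3} = t_{n+1}² (t_{n+2} − 2) + 2` -/
lemma trecur (lam E : ℝ) (n : ℕ) :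
    t lam E (n+3) = (t lam E (n+1))^2 * (t lam E (n+2) - 2) + 2 := by
  set P := A lam E (n+1) with hP
  set Q := B lam E (n+1) with hQ
  have h1 : t lam E (n+3) = (Q*Q*(P*P)).trace := by
    have : t lam E (n+3) = ((P*Q)*(Q*P)).trace := by
      rw [t, Asucc lam E (n+2), Bsucc lam E (n+1), Asucc lam E (n+1)]
    rw [this, Matrix.trace_mul_comm, show (Q*P)*(P*Q) = Q * ((P*(P*Q))) from by
      simp only [mul_assoc], Matrix.trace_mul_comm, show P*(P*Q)*Q = P*P*(Q*Q) from by
      simp only [mul_assoc]]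
    rw [Matrix.trace_mul_comm]
  have hdet := detA lam E (n+1)
  have htrQ : Q.trace = t lam E (n+1) := trB lam E n
  have htrP : P.trace = t lam E (n+1) := rfl
  have h2 : (Q*P).trace = t lam E (n+2) := by rw [t, Asucc lam E (n+1)]
  rw [h1, tr4, hdet.1, hdet.2, htrQ, htrP, h2]
  ring

/-- the core dynamical lemma: if eventually `|x_n| ≤ 2 < |y_n|` for the
Thue–Morse-type trace recursion, then `x_n → 0` and `y_n → −∞`. -/
lemma key (x y : ℕ → ℝ) (N : ℕ) (hN : 1 ≤ N)
    (h1 : ∀ n, 1 ≤ n → x (n+1) - 2 = (x n)^2 * (y n - 2))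
    (h2 : ∀ n, y (n+1) - 2 = (y n)^2 * (x (n+1) - 2))
    (hx : ∀ n, N ≤ n → |x n| ≤ 2)
    (hy : ∀ n, N ≤ n → 2 < |y n|) :
    Tendsto x atTop (nhds 0) ∧ Tendsto y atTop atBot := by
  have hN4 : ∀ n, N ≤ n → y n < -2 := by
    intro n hn
    rcases lt_abs.mp (hy n hn) with h | h
    · exfalso
      have e1 := h1 n (hN.trans hn)
      have hb := abs_le.mp (hx (n+1) (by omega))
      have hx1 : x (n+1) - 2 = 0 := by nlinarith [sq_nonneg (x n)]
      have e2 := h2 n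
      rw [hx1, mul_zero] at e2
      have hye : y (n+1) = 2 := by linarith
      have hcon := hy (n+1) (by omega)
      rw [hye] at hcon
      norm_num at hcon
    · linarith
  have hxsq : ∀ n, N ≤ n → (x n)^2 * (2 - y n) ≤ 4 ∧ (x n)^2 < 1 := by
    intro n hn
    have e1 := h1 n (hN.trans hn)
    have hb := abs_le.mp (hx (n+1) (by omega))
    have h24 : (x n)^2 * (2 - y n) = 2 - x (n+1) := by linear_combination e1
    have hle : (x n)^2 * (2 - y n) ≤ 4 := by linarith
    have hyn := hN4 n hn
    refine ⟨hle, by nlinarith [sq_nonneg (x n)]⟩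
  have hvrec : ∀ n, N ≤ n → 2 - y (n+1) = (2 - y n - 2)^2 * (2 - x (n+1)) := by
    intro n hn
    linear_combination -h2 n
  set c : ℝ := 3 * ((2 - y N) - 4) with hc
  have hcpos : 0 < c := by have := hN4 N le_rfl; simp [hc]; linarith
  have hgrow : ∀ k : ℕ, (2 - y N) + c * k ≤ 2 - y (N + k) := by
    intro k
    induction k with
    | zero => simp
    | succ m ih =>
        have hk4 : 4 < 2 - y (N + m) := by
          have : (0:ℝ) ≤ c * m := by positivity
          have hy4 := hN4 N le_rfl
          linarith
        have hrec := hvrec (N + m) (by omega)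
        have hxb : (x (N + m + 1))^2 < 1 := (hxsq (N + m + 1) (by omega)).2
        have hxb1 : x (N + m + 1) < 1 := by nlinarith
        have h2x : 1 ≤ 2 - x (N + m + 1) := by linarith
        have hsq : (2 - y (N+m) - 2)^2 ≤ 2 - y (N + m + 1) := by
          nlinarith [sq_nonneg (2 - y (N+m) - 2)]
        have hstep : 2 - y (N+m) + c ≤ (2 - y (N+m) - 2)^2 := by
          have hy4 := hN4 N le_rfl
          have hm : (2 - y N) + c * m ≤ 2 - y (N + m) := ih
          have hcm : (0:ℝ) ≤ c * m := by positivity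
          nlinarith
        have : (N + (m+1)) = (N + m) + 1 := by omega
        rw [this]
        push_cast
        have := ih
        nlinarith
  have hvT : Tendsto (fun n => 2 - y n) atTop atTop := by
    rw [tendsto_atTop]
    intro b
    obtain ⟨k₀, hk₀⟩ := exists_nat_ge ((b - (2 - y N)) / c)
    filter_upwards [eventually_ge_atTop (N + k₀)] with n hn
    have h := hgrow (n - N)
    rw [show N + (n - N) = n from by omega] at h
    have hcast : (k₀ : ℝ) ≤ ((n - N : ℕ) : ℝ) := by exact_mod_cast (by omega : k₀ ≤ n - N)
    have hdiv : b - (2 - y N) ≤ c * k₀ := by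
      rw [div_le_iff₀ hcpos] at hk₀; linarith
    have : c * (k₀:ℝ) ≤ c * ((n - N : ℕ):ℝ) := by
      exact mul_le_mul_of_nonneg_left hcast hcpos.le
    linarith
  have hyB : Tendsto y atTop atBot := by
    have h1' : Tendsto (fun n => -(2 - y n)) atTop atBot :=
      tendsto_neg_atTop_atBot.comp hvT
    have h2' := tendsto_atBot_add_const_left atTop (2:ℝ) h1'
    refine h2'.congr (fun n => by ring)
  have hxsq0 : Tendsto (fun n => (x n)^2) atTop (nhds 0) := by
    apply squeeze_zero' (Eventually.of_forall fun n => sq_nonneg (x n))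
      (g := fun n => 4 / (2 - y n))
    · filter_upwards [eventually_ge_atTop N] with n hn
      have := (hxsq n hn).1
      have h4 := hN4 n hn
      rw [le_div_iff₀ (by linarith)]
      linarith
    · exact tendsto_const_nhds.div_atTop hvT
  have habs : Tendsto (fun n => |x n|) atTop (nhds 0) := by
    have h' := (Real.continuous_sqrt.tendsto 0).comp hxsq0
    rw [Real.sqrt_zero] at h'
    exact h'.congr fun n => by simp [Function.comp, Real.sqrt_sq_eq_abs]
  have hx0 : Tendsto x atTop (nhds 0) := by
    have hneg : Tendsto (fun n => -|x n|) atTop (nhds 0) := by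
      simpa using habs.neg
    exact tendsto_of_tendsto_of_tendsto_of_le_of_le hneg habs
      (fun n => neg_abs_le _) (fun n => le_abs_self _)
  exact ⟨hx0, hyB⟩

/-- **Lemma (characterization of `Σ_II` and `Σ_III` via trace limits).**
`Σ_II = {E : t_{2n}(E) → 0 and t_{2n−1}(E) → −∞}` and
`Σ_III = {E : t_{2n−1}(E) → 0 and t_{2n}(E) → −∞}`. -/
theorem sigmaII_III_characterization (lam : ℝ) (hlam : lam ≠ 0) :
    SigmaII lam =
      {E : ℝ | Tendsto (fun n : ℕ => t lam E (2 * n)) atTop (nhds 0) ∧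
        Tendsto (fun n : ℕ => t lam E (2 * n - 1)) atTop atBot} ∧
    SigmaIII lam =
      {E : ℝ | Tendsto (fun n : ℕ => t lam E (2 * n - 1)) atTop (nhds 0) ∧
        Tendsto (fun n : ℕ => t lam E (2 * n)) atTop atBot} := by
  constructor
  · ext E
    simp only [SigmaII, Set.mem_setOf_eq]
    constructor
    · rintro ⟨n₀, hn₀⟩
      have hk := key (fun n => t lam E (2*n)) (fun n => t lam E (2*n+1)) (max n₀ 1)
        (le_max_right _ _)
        (by
          intro n hn
          obtain ⟨j, rfl⟩ : ∃ j, n = j + 1 := ⟨n-1, by omega⟩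
          have h := trecur lam E (2*j+1)
          simp only [show 2*(j+1+1) = 2*j+1+3 from by ring, show 2*(j+1) = 2*j+1+1 from by ring,
            show 2*(j+1)+1 = 2*j+1+2 from by ring] at *
          linarith)
        (by
          intro n
          have h := trecur lam E (2*n)
          simp only [show 2*(n+1)+1 = 2*n+3 from by ring, show 2*(n+1) = 2*n+2 from by ring] at *
          linarith)
        (fun n hn => (hn₀ n (le_trans (le_max_left _ _) hn)).1)
        (fun n hn => (hn₀ n (le_trans (le_max_left _ _) hn)).2)
      refine ⟨hk.1, ?_⟩
      have h := hk.2.comp (tendsto_sub_atTop_nat 1)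
      refine h.congr' ?_
      filter_upwards [eventually_ge_atTop 1] with n hn
      show t lam E (2*(n-1)+1) = t lam E (2*n-1)
      congr 1
      omega
    · rintro ⟨hx0, hyB⟩
      have hA := NormedAddCommGroup.tendsto_nhds_zero.mp hx0 2 (by norm_num)
      have hB := hyB.eventually_lt_atBot (-2)
      obtain ⟨N1, hN1⟩ := eventually_atTop.mp hA
      obtain ⟨N2, hN2⟩ := eventually_atTop.mp hB
      refine ⟨N1 + N2 + 1, fun n hn => ⟨?_, ?_⟩⟩
      · have := hN1 n (by omega)
        rw [Real.norm_eq_abs] at this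
        linarith
      · have h := hN2 (n+1) (by omega)
        rw [show 2*(n+1)-1 = 2*n+1 from by omega] at h
        exact lt_abs.mpr (Or.inr (by linarith))
  · ext E
    simp only [SigmaIII, Set.mem_setOf_eq]
    constructor
    · rintro ⟨n₀, hn₀⟩
      have hk := key (fun n => t lam E (2*n+1)) (fun n => t lam E (2*n+2)) (max n₀ 1)
        (le_max_right _ _)
        (by
          intro n _
          have h := trecur lam E (2*n)
          simp only [show 2*(n+1)+1 = 2*n+3 from by ring, show 2*(n+1) = 2*n+2 from by ring] at *
          linarith)
        (by
          intro n
          have h := trecur lam E (2*n+1)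
          simp only [show 2*(n+1)+2 = 2*n+1+3 from by ring, show 2*(n+1)+1 = 2*n+1+2 from by ring,
            show 2*n+2 = 2*n+1+1 from by ring] at *
          linarith)
        (fun n hn => (hn₀ n (le_trans (le_max_left _ _) hn)).1)
        (fun n hn => by
          have h := (hn₀ (n+1) (by omega : n₀ ≤ n + 1)).2
          rw [show 2*(n+1) = 2*n+2 from by ring] at h
          exact h)
      constructor
      · have h := hk.1.comp (tendsto_sub_atTop_nat 1)
        refine h.congr' ?_
        filter_upwards [eventually_ge_atTop 1] with n hn
        show t lam E (2*(n-1)+1) = t lam E (2*n-1)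
        congr 1
        omega
      · have h := hk.2.comp (tendsto_sub_atTop_nat 1)
        refine h.congr' ?_
        filter_upwards [eventually_ge_atTop 1] with n hn
        show t lam E (2*(n-1)+2) = t lam E (2*n)
        congr 1
        omega
    · rintro ⟨hx0, hyB⟩
      have hA := NormedAddCommGroup.tendsto_nhds_zero.mp hx0 2 (by norm_num)
      have hB := hyB.eventually_lt_atBot (-2)
      obtain ⟨N1, hN1⟩ := eventually_atTop.mp hA
      obtain ⟨N2, hN2⟩ := eventually_atTop.mp hB
      refine ⟨N1 + N2 + 1, fun n hn => ⟨?_, ?_⟩⟩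
      · have h := hN1 (n+1) (by omega)
        rw [Real.norm_eq_abs, show 2*(n+1)-1 = 2*n+1 from by omega] at h
        linarith [le_of_lt h]
      · have h := hN2 n (by omega)
        exact lt_abs.mpr (Or.inr (by linarith))
end TMH
end
end
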